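/- arXiv:0708.0309 — 3 statements merged into one kernel-verified Lean document; each statement's English description precedes it below -/
import Mathlib

section
/- Let V be a 4n-dimensional quaternion-Hermitian vector space with structures I, J, K, and suppose γ_I, γ_J, γ_K are two-forms on V with n > 1 satisfying γ_I ∧ ω_J = γ_J ∧ ω_I, γ_J ∧ ω_K = γ_K ∧ ω_J, and γ_K ∧ ω_I = γ_I ∧ ω_K, where ω_A(x,y) = ⟨x, Ay⟩. Then there is a constant c with γ_A = c·ω_A for A = I, J, K, and 2n·c = ⟨γ_I, ω_I⟩ = ⟨γ_J, ω_J⟩ = ⟨γ_K, ω_K⟩. -/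
open scoped RealInnerProductSpace

/-- Wedge product of two 2-forms, as a 4-linear form. -/
def wedge22 {V : Type*} (a b : V → V → ℝ) : V → V → V → V → ℝ := fun x y z u =>
  a x y * b z u - a x z * b y u + a x u * b y z +
  a y z * b x u - a y u * b x z + a z u * b x y

/-- Normalized inner product of 2-forms via an orthonormal basis. -/
noncomputable def ip2 {V : Type*} {ι : Type*} [Fintype ι] (e : ι → V) (a b : V → V → ℝ) : ℝ :=
  (1 / 2 : ℝ) * ∑ i, ∑ j, a (e i) (e j) * b (e i) (e j)

/-!
Evaluate the three wedge identities on vectors `x, Ix, Jx, Kx, y, Iy, Jy, Ky` with `y` orthogonal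
to the quaternionic line `ℍx = span {x, Ix, Jx, Kx}` (such `y ≠ 0` exist because `dim V > 4`).
Almost every term vanishes, and what survives says that `γ_I(x, ·)` kills `Jx`, `Kx` and `ℍxᗮ`,
hence is a multiple `c(x) ω_I(x, ·)`, and that `γ_J(x, Jx) = γ_I(x, Ix)`. Skew-symmetry gives
`c(x) = c(z)` whenever `ω_I(x, z) ≠ 0`, and any two nonzero vectors have such a common `z`, so `c`
is constant. Cycling `(I, J, K)` treats `γ_J` and `γ_K`, the identity `γ_J(x, Jx) = γ_I(x, Ix)`
matches the constants, and `⟨c ω_A, ω_A⟩ = c · dim V / 2 = 2nc`.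
-/

theorem exists_eq_mul_of_forall_exists_eq_mul {α : Type*} {γ ω : α → α → ℝ}
    (hγ : ∀ x y, γ x y = -γ y x) (hω : ∀ x y, ω x y = -ω y x)
    (hconn : ∀ x y, (∃ v, ω x v ≠ 0) → (∃ v, ω y v ≠ 0) → ∃ z, ω x z ≠ 0 ∧ ω y z ≠ 0)
    (hpt : ∀ x, ∃ c, ∀ v, γ x v = c * ω x v) :
    ∃ c, ∀ x v, γ x v = c * ω x v := by
  choose c hc using hpt
  have hlink : ∀ x z, ω x z ≠ 0 → c x = c z := by
    intro x z hxz
    refine mul_right_cancel₀ hxz ?_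
    rw [← hc, hγ, hc, hω]
    ring
  by_cases hdeg : ∃ x₀ v₀, ω x₀ v₀ ≠ 0
  · obtain ⟨x₀, v₀, h₀⟩ := hdeg
    refine ⟨c x₀, fun x v => ?_⟩
    by_cases hx : ∃ w, ω x w ≠ 0
    · obtain ⟨z, hx₀z, hxz⟩ := hconn x₀ x ⟨v₀, h₀⟩ hx
      rw [hc, hlink x z hxz, hlink x₀ z hx₀z]
    · push Not at hx
      rw [hc, hx, mul_zero, mul_zero]
  · push Not at hdeg
    exact ⟨0, fun x v => by rw [hc, hdeg, mul_zero, mul_zero]⟩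

section

variable {V : Type*} [NormedAddCommGroup V] [InnerProductSpace ℝ V]

structure IsCompatibleComplexStructure (A : V →ₗ[ℝ] V) : Prop where
  map_map : ∀ x, A (A x) = -x
  inner_map_map : ∀ x y, ⟪A x, A y⟫ = ⟪x, y⟫

namespace IsCompatibleComplexStructure

variable {A : V →ₗ[ℝ] V}

theorem inner_map_left (hA : IsCompatibleComplexStructure A) (x y : V) :
    ⟪A x, y⟫ = -⟪x, A y⟫ := by
  have h := hA.inner_map_map x (A y)
  rw [hA.map_map, inner_neg_right] at h
  linarith

theorem inner_self_map (hA : IsCompatibleComplexStructure A) (x : V) : ⟪x, A x⟫ = 0 := by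
  have h := hA.inner_map_left x x
  rw [real_inner_comm] at h
  linarith

theorem exists_inner_map_ne_zero (hA : IsCompatibleComplexStructure A) {x y : V}
    (hx : x ≠ 0) (hy : y ≠ 0) : ∃ z, ⟪x, A z⟫ ≠ 0 ∧ ⟪y, A z⟫ ≠ 0 := by
  have hxx := real_inner_self_pos.mpr hx
  have hyy := real_inner_self_pos.mpr hy
  have hyx := real_inner_comm x y
  -- `⟪u, A (A w)⟫ = -⟪u, w⟫`, and one of `w = x ± y` is orthogonal to neither `x` nor `y`
  rcases le_or_gt 0 ⟪x, y⟫ with hxy | hxy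
  · refine ⟨A (x + y), ?_, ?_⟩ <;>
      simp only [hA.map_map, inner_neg_right, inner_add_right] <;> intro h <;> linarith
  · refine ⟨A (x - y), ?_, ?_⟩ <;>
      simp only [hA.map_map, inner_neg_right, inner_sub_right] <;> intro h <;> linarith

theorem ip2_mul_inner {ι : Type*} [Fintype ι] (hA : IsCompatibleComplexStructure A)
    (e : OrthonormalBasis ι ℝ V) (c : ℝ) :
    ip2 e (fun x y => c * ⟪x, A y⟫) (fun x y => ⟪x, A y⟫) = c * Fintype.card ι / 2 := by
  have hrow : ∀ i, ∑ j, c * ⟪e i, A (e j)⟫ * ⟪e i, A (e j)⟫ = c := fun i => by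
    calc ∑ j, c * ⟪e i, A (e j)⟫ * ⟪e i, A (e j)⟫
        = c * ∑ j, ⟪A (e i), e j⟫ * ⟪e j, A (e i)⟫ := by
          rw [Finset.mul_sum]
          refine Finset.sum_congr rfl fun j _ => ?_
          rw [real_inner_comm (A (e i)) (e j), hA.inner_map_left]
          ring
      _ = c := by
          rw [e.sum_inner_mul_inner, hA.inner_map_map, real_inner_self_eq_norm_sq,
            e.orthonormal.1 i]
          ring
  simp only [ip2, hrow, Finset.sum_const, Finset.card_univ, nsmul_eq_mul]
  ring

end IsCompatibleComplexStructure

structure IsHyperHermitian (I J K : V →ₗ[ℝ] V) : Prop where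
  isCompatible_I : IsCompatibleComplexStructure I
  isCompatible_J : IsCompatibleComplexStructure J
  K_eq : ∀ x, K x = I (J x)
  anticomm : ∀ x, I (J x) = -J (I x)

namespace IsHyperHermitian

variable {I J K : V →ₗ[ℝ] V}

theorem J_I (hq : IsHyperHermitian I J K) (x : V) : J (I x) = -I (J x) := by
  rw [hq.anticomm, neg_neg]

theorem isCompatible_K (hq : IsHyperHermitian I J K) : IsCompatibleComplexStructure K where
  map_map x := by
    simp [hq.K_eq, hq.J_I, hq.isCompatible_I.map_map, hq.isCompatible_J.map_map]
  inner_map_map x y := by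
    simp [hq.K_eq, hq.isCompatible_I.inner_map_map, hq.isCompatible_J.inner_map_map]

theorem inner_self_I_J (hq : IsHyperHermitian I J K) (x : V) : ⟪x, I (J x)⟫ = 0 := by
  rw [← hq.K_eq]
  exact hq.isCompatible_K.inner_self_map x

theorem cycle (hq : IsHyperHermitian I J K) : IsHyperHermitian J K I where
  isCompatible_I := hq.isCompatible_J
  isCompatible_J := hq.isCompatible_K
  K_eq x := by simp [hq.K_eq, hq.J_I, hq.isCompatible_J.map_map]
  anticomm x := by simp [hq.K_eq, hq.J_I, hq.isCompatible_J.map_map]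

end IsHyperHermitian

def quaternionicLine (I J K : V →ₗ[ℝ] V) (x : V) : Submodule ℝ V :=
  Submodule.span ℝ {x, I x, J x, K x}

theorem quaternionicLine_orthogonal_ne_bot [FiniteDimensional ℝ V] (I J K : V →ₗ[ℝ] V)
    (hdim : 4 < Module.finrank ℝ V) (x : V) : (quaternionicLine I J K x)ᗮ ≠ ⊥ := by
  classical
  have hle : Module.finrank ℝ (quaternionicLine I J K x) ≤ 4 := by
    have h := finrank_span_finset_le_card (R := ℝ) ({x, I x, J x, K x} : Finset V)
    push_cast at h
    exact h.trans Finset.card_le_four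
  have hsum := (quaternionicLine I J K x).finrank_add_finrank_orthogonal
  intro hbot
  rw [hbot, finrank_bot] at hsum
  omega

theorem IsHyperHermitian.inner_eq_zero_of_mem_orthogonal {I J K : V →ₗ[ℝ] V}
    (hq : IsHyperHermitian I J K) {x y : V} (hy : y ∈ (quaternionicLine I J K x)ᗮ) :
    ⟪x, y⟫ = 0 ∧ ⟪x, I y⟫ = 0 ∧ ⟪x, J y⟫ = 0 ∧ ⟪x, I (J y)⟫ = 0 := by
  have h : ∀ u ∈ ({x, I x, J x, K x} : Set V), ⟪u, y⟫ = 0 := fun u hu =>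
    (Submodule.mem_orthogonal _ y).mp hy u (Submodule.subset_span hu)
  have hI := h (I x) (by simp)
  have hJ := h (J x) (by simp)
  have hK := h (K x) (by simp)
  rw [hq.isCompatible_I.inner_map_left] at hI
  rw [hq.isCompatible_J.inner_map_left] at hJ
  rw [hq.K_eq, hq.isCompatible_I.inner_map_left, hq.isCompatible_J.inner_map_left, hq.J_I,
    inner_neg_right] at hK
  exact ⟨h x (by simp), by linarith, by linarith, by linarith⟩

structure IsWedgeCompatible (I J K : V →ₗ[ℝ] V) (γI γJ γK : V →ₗ[ℝ] V →ₗ[ℝ] ℝ) : Prop where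
  I_J : wedge22 (fun x y => γI x y) (fun x y => ⟪x, J y⟫) =
    wedge22 (fun x y => γJ x y) (fun x y => ⟪x, I y⟫)
  J_K : wedge22 (fun x y => γJ x y) (fun x y => ⟪x, K y⟫) =
    wedge22 (fun x y => γK x y) (fun x y => ⟪x, J y⟫)
  K_I : wedge22 (fun x y => γK x y) (fun x y => ⟪x, I y⟫) =
    wedge22 (fun x y => γI x y) (fun x y => ⟪x, K y⟫)

namespace IsWedgeCompatible

variable {I J K : V →ₗ[ℝ] V} {γI γJ γK : V →ₗ[ℝ] V →ₗ[ℝ] ℝ}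

theorem cycle (hw : IsWedgeCompatible I J K γI γJ γK) : IsWedgeCompatible J K I γJ γK γI :=
  ⟨hw.J_K, hw.K_I, hw.I_J⟩

theorem apply_J_self_eq_zero (hw : IsWedgeCompatible I J K γI γJ γK)
    (hq : IsHyperHermitian I J K) {x : V} (hx : (quaternionicLine I J K x)ᗮ ≠ ⊥) :
    γI x (J x) = 0 := by
  obtain ⟨y, hy, hy0⟩ := Submodule.exists_mem_ne_zero_of_ne_bot hx
  obtain ⟨hxy, hxIy, hxJy, hxIJy⟩ := hq.inner_eq_zero_of_mem_orthogonal hy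
  have hKI := congrFun₂ (congrFun₂ hw.K_I x (J x)) y (I (J y))
  simp only [wedge22, hq.K_eq, hq.J_I, map_neg, hq.isCompatible_I.map_map,
    hq.isCompatible_J.map_map, inner_neg_right, neg_neg,
    hq.isCompatible_J.inner_map_left, hq.isCompatible_I.inner_self_map,
    hq.isCompatible_J.inner_self_map, hq.inner_self_I_J, hxy, hxIy, hxJy, hxIJy, mul_zero,
    mul_neg, neg_zero, add_zero, sub_zero] at hKI
  exact mul_right_cancel₀ (real_inner_self_pos.mpr hy0).ne' (by linarith)

theorem apply_I_J_self_eq_zero (hw : IsWedgeCompatible I J K γI γJ γK)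
    (hq : IsHyperHermitian I J K) {x : V} (hx : (quaternionicLine I J K x)ᗮ ≠ ⊥) :
    γI x (I (J x)) = 0 := by
  obtain ⟨y, hy, hy0⟩ := Submodule.exists_mem_ne_zero_of_ne_bot hx
  obtain ⟨hxy, hxIy, hxJy, hxIJy⟩ := hq.inner_eq_zero_of_mem_orthogonal hy
  have hIJ := congrFun₂ (congrFun₂ hw.I_J x (I (J x))) y (J y)
  simp only [wedge22, hq.J_I, map_neg, hq.isCompatible_I.map_map, hq.isCompatible_J.map_map,
    inner_neg_right, neg_neg, hq.isCompatible_I.inner_map_left,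
    hq.isCompatible_J.inner_map_left, hq.isCompatible_I.inner_self_map,
    hq.isCompatible_J.inner_self_map, hq.inner_self_I_J, hxy, hxIy, hxJy, hxIJy, mul_zero,
    mul_neg, neg_zero, add_zero, sub_zero] at hIJ
  exact mul_right_cancel₀ (real_inner_self_pos.mpr hy0).ne' (by linarith)

theorem apply_eq_zero_of_mem_orthogonal (hw : IsWedgeCompatible I J K γI γJ γK)
    (hq : IsHyperHermitian I J K) {x y : V} (hy : y ∈ (quaternionicLine I J K x)ᗮ) :
    γI x y = 0 := by
  rcases eq_or_ne y 0 with rfl | hy0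
  · exact map_zero _
  obtain ⟨hxy, hxIy, hxJy, hxIJy⟩ := hq.inner_eq_zero_of_mem_orthogonal hy
  have hKI := congrFun₂ (congrFun₂ hw.K_I x y) (I y) (J y)
  have hIJ := congrFun₂ (congrFun₂ hw.I_J x y) (I y) (I (J y))
  have hJK := congrFun₂ (congrFun₂ hw.J_K x (I y)) (J y) (I (J y))
  simp only [wedge22, hq.K_eq, hq.J_I, map_neg, hq.isCompatible_I.map_map,
    hq.isCompatible_J.map_map, inner_neg_right, neg_neg,
    hq.isCompatible_I.inner_map_left, hq.isCompatible_J.inner_map_left,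
    hq.isCompatible_I.inner_self_map, hq.isCompatible_J.inner_self_map,
    hq.inner_self_I_J, hxy, hxIy, hxJy, hxIJy, mul_zero, mul_neg, neg_zero, add_zero,
    zero_add, sub_zero, zero_sub] at hKI hIJ hJK
  -- with `a = γI x y`, `b = γJ x (I (J y))`, `c = γK x (J y)` these read
  -- `c = a`, `a = -b`, `b = c`, each multiplied by `⟪y, y⟫`
  exact mul_right_cancel₀ (real_inner_self_pos.mpr hy0).ne' (by linarith)

theorem apply_J_self_eq_apply_I_self (hw : IsWedgeCompatible I J K γI γJ γK)
    (hq : IsHyperHermitian I J K) {x : V} (hx : (quaternionicLine I J K x)ᗮ ≠ ⊥) :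
    γJ x (J x) = γI x (I x) := by
  obtain ⟨y, hy, hy0⟩ := Submodule.exists_mem_ne_zero_of_ne_bot hx
  obtain ⟨hxy, hxIy, hxJy, hxIJy⟩ := hq.inner_eq_zero_of_mem_orthogonal hy
  have hKI := congrFun₂ (congrFun₂ hw.K_I x (I x)) y (I (J y))
  have hJK := congrFun₂ (congrFun₂ hw.J_K x (J x)) y (I (J y))
  simp only [wedge22, hq.K_eq, hq.J_I, map_neg, hq.isCompatible_I.map_map,
    hq.isCompatible_J.map_map, inner_neg_right, neg_neg,
    hq.isCompatible_I.inner_map_left, hq.isCompatible_J.inner_map_left,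
    hq.isCompatible_I.inner_self_map, hq.isCompatible_J.inner_self_map, hxy, hxIy, hxJy,
    hxIJy, mul_zero, mul_neg, neg_zero, add_zero, zero_add, sub_zero] at hKI hJK
  -- both sides times `⟪y, y⟫` equal `γK y (I (J y)) * ⟪x, x⟫`
  exact mul_right_cancel₀ (real_inner_self_pos.mpr hy0).ne' (by linarith)

theorem inner_self_mul_apply (hw : IsWedgeCompatible I J K γI γJ γK)
    (hq : IsHyperHermitian I J K) (hγ : ∀ x y, γI x y = -γI y x) {x : V}
    (hx : (quaternionicLine I J K x)ᗮ ≠ ⊥) (v : V) :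
    ⟪x, x⟫ * γI x v = -(γI x (I x) * ⟪x, I v⟫) := by
  let L : V →ₗ[ℝ] ℝ := ⟪x, x⟫ • γI x + γI x (I x) • (innerₗ V x ∘ₗ I)
  have hLapply : ∀ w, L w = ⟪x, x⟫ * γI x w + γI x (I x) * ⟪x, I w⟫ := fun w => rfl
  have hline : quaternionicLine I J K x ≤ LinearMap.ker L := by
    refine Submodule.span_le.mpr ?_
    have hxx : γI x x = 0 := by linarith [hγ x x]
    rintro _ (rfl | rfl | rfl | rfl) <;> rw [SetLike.mem_coe, LinearMap.mem_ker, hLapply]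
    · rw [hxx, hq.isCompatible_I.inner_self_map]
      ring
    · rw [hq.isCompatible_I.map_map, inner_neg_right]
      ring
    · rw [hw.apply_J_self_eq_zero hq hx, hq.inner_self_I_J]
      ring
    · rw [hq.K_eq, hw.apply_I_J_self_eq_zero hq hx, hq.isCompatible_I.map_map, inner_neg_right,
        hq.isCompatible_J.inner_self_map]
      ring
  have horth : (quaternionicLine I J K x)ᗮ ≤ LinearMap.ker L := fun y hy => by
    simp [hLapply, hw.apply_eq_zero_of_mem_orthogonal hq hy,
      (hq.inner_eq_zero_of_mem_orthogonal hy).2.1]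
  have hLv : L v = 0 := by
    have : FiniteDimensional ℝ (quaternionicLine I J K x) :=
      FiniteDimensional.span_of_finite ℝ (Set.toFinite _)
    refine sup_le hline horth ?_
    rw [Submodule.sup_orthogonal_of_hasOrthogonalProjection]
    exact Submodule.mem_top
  linarith [hLapply v]

theorem exists_eq_mul_inner [FiniteDimensional ℝ V] (hw : IsWedgeCompatible I J K γI γJ γK)
    (hq : IsHyperHermitian I J K) (hdim : 4 < Module.finrank ℝ V)
    (hγ : ∀ x y, γI x y = -γI y x) : ∃ c, ∀ x v, γI x v = c * ⟪x, I v⟫ := by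
  have hI := hq.isCompatible_I
  refine exists_eq_mul_of_forall_exists_eq_mul hγ (fun x y => ?_) (fun x y hx hy => ?_)
    (fun x => ?_)
  · rw [real_inner_comm (I x) y, hI.inner_map_left, neg_neg]
  · obtain ⟨v, hxv⟩ := hx
    obtain ⟨w, hyw⟩ := hy
    refine hI.exists_inner_map_ne_zero ?_ ?_ <;> rintro rfl <;> simp_all
  · rcases eq_or_ne x 0 with rfl | hx0
    · exact ⟨0, fun v => by simp⟩
    refine ⟨-γI x (I x) / ⟪x, x⟫, fun v => ?_⟩
    have hxx := (real_inner_self_pos.mpr hx0).ne'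
    have h := hw.inner_self_mul_apply hq hγ (quaternionicLine_orthogonal_ne_bot I J K hdim x) v
    field_simp
    linarith

theorem eq_of_eq_mul_inner [FiniteDimensional ℝ V] (hw : IsWedgeCompatible I J K γI γJ γK)
    (hq : IsHyperHermitian I J K) (hdim : 4 < Module.finrank ℝ V) {c c' : ℝ}
    (hcI : ∀ x v, γI x v = c * ⟪x, I v⟫) (hcJ : ∀ x v, γJ x v = c' * ⟪x, J v⟫) : c' = c := by
  have : Nontrivial V := Module.nontrivial_of_finrank_pos (R := ℝ) (by omega)
  obtain ⟨x, hx⟩ := exists_ne (0 : V)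
  have h := hw.apply_J_self_eq_apply_I_self hq (quaternionicLine_orthogonal_ne_bot I J K hdim x)
  rw [hcI, hcJ, hq.isCompatible_I.map_map, hq.isCompatible_J.map_map, inner_neg_right] at h
  exact mul_right_cancel₀ (neg_ne_zero.mpr (real_inner_self_pos.mpr hx).ne') h

end IsWedgeCompatible

end

theorem stmt4_general (n : ℕ) (hn : 1 < n) (V : Type*) [NormedAddCommGroup V]
    [InnerProductSpace ℝ V] [FiniteDimensional ℝ V]
    (hdim : Module.finrank ℝ V = 4 * n)
    (ι : Type*) [Fintype ι] (e : OrthonormalBasis ι ℝ V)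
    (I J K : V →ₗ[ℝ] V)
    (hI2 : ∀ x : V, I (I x) = -x) (hJ2 : ∀ x : V, J (J x) = -x)
    (hK : ∀ x : V, K x = I (J x)) (hIJ : ∀ x : V, I (J x) = -J (I x))
    (hIiso : ∀ x y : V, ⟪I x, I y⟫ = ⟪x, y⟫)
    (hJiso : ∀ x y : V, ⟪J x, J y⟫ = ⟪x, y⟫)
    (γI γJ γK : V →ₗ[ℝ] V →ₗ[ℝ] ℝ)
    (hγI : ∀ x y : V, γI x y = -γI y x)
    (hγJ : ∀ x y : V, γJ x y = -γJ y x)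
    (hγK : ∀ x y : V, γK x y = -γK y x)
    (h1 : wedge22 (fun x y => γI x y) (fun x y => ⟪x, J y⟫) =
          wedge22 (fun x y => γJ x y) (fun x y => ⟪x, I y⟫))
    (h2 : wedge22 (fun x y => γJ x y) (fun x y => ⟪x, K y⟫) =
          wedge22 (fun x y => γK x y) (fun x y => ⟪x, J y⟫))
    (h3 : wedge22 (fun x y => γK x y) (fun x y => ⟪x, I y⟫) =
          wedge22 (fun x y => γI x y) (fun x y => ⟪x, K y⟫)) :
    ∃ c : ℝ,
      (∀ x y : V, γI x y = c * ⟪x, I y⟫) ∧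
      (∀ x y : V, γJ x y = c * ⟪x, J y⟫) ∧
      (∀ x y : V, γK x y = c * ⟪x, K y⟫) ∧
      2 * (n : ℝ) * c = ip2 e (fun x y => γI x y) (fun x y => ⟪x, I y⟫) ∧
      ip2 e (fun x y => γI x y) (fun x y => ⟪x, I y⟫) =
        ip2 e (fun x y => γJ x y) (fun x y => ⟪x, J y⟫) ∧
      ip2 e (fun x y => γJ x y) (fun x y => ⟪x, J y⟫) =
        ip2 e (fun x y => γK x y) (fun x y => ⟪x, K y⟫) := by
  have hq : IsHyperHermitian I J K := ⟨⟨hI2, hIiso⟩, ⟨hJ2, hJiso⟩, hK, hIJ⟩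
  have hw : IsWedgeCompatible I J K γI γJ γK := ⟨h1, h2, h3⟩
  have hdim4 : 4 < Module.finrank ℝ V := by omega
  obtain ⟨c, hcI⟩ := hw.exists_eq_mul_inner hq hdim4 hγI
  obtain ⟨cJ, hcJ⟩ := hw.cycle.exists_eq_mul_inner hq.cycle hdim4 hγJ
  obtain ⟨cK, hcK⟩ := hw.cycle.cycle.exists_eq_mul_inner hq.cycle.cycle hdim4 hγK
  obtain rfl : c = cJ := (hw.eq_of_eq_mul_inner hq hdim4 hcI hcJ).symm
  obtain rfl : c = cK := (hw.cycle.eq_of_eq_mul_inner hq.cycle hdim4 hcJ hcK).symm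
  have hcard : (Fintype.card ι : ℝ) = 4 * n := by
    rw [← Module.finrank_eq_card_basis e.toBasis, hdim, Nat.cast_mul, Nat.cast_ofNat]
  refine ⟨c, hcI, hcJ, hcK, ?_⟩
  rw [funext₂ hcI, funext₂ hcJ, funext₂ hcK, hq.isCompatible_I.ip2_mul_inner,
    hq.isCompatible_J.ip2_mul_inner, hq.isCompatible_K.ip2_mul_inner, hcard]
  exact ⟨by ring, rfl, rfl⟩

/-- Lemma on `γ_A`: if `γ_I ∧ ω_J = γ_J ∧ ω_I` and cyclic analogues,
then `γ_A = c ω_A` with `2 n c = ⟨γ_I, ω_I⟩ = ⟨γ_J, ω_J⟩ = ⟨γ_K, ω_K⟩`. -/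
theorem stmt4 (n : ℕ) (hn : 1 < n) (V : Type*) [NormedAddCommGroup V]
    [InnerProductSpace ℝ V] [FiniteDimensional ℝ V]
    (hdim : Module.finrank ℝ V = 4 * n)
    (ι : Type*) [Fintype ι] (e : OrthonormalBasis ι ℝ V)
    (I J K : V →ₗ[ℝ] V)
    (hI2 : ∀ x : V, I (I x) = -x) (hJ2 : ∀ x : V, J (J x) = -x)
    (hK : ∀ x : V, K x = I (J x)) (hIJ : ∀ x : V, I (J x) = -J (I x))
    (hIiso : ∀ x y : V, ⟪I x, I y⟫ = ⟪x, y⟫)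
    (hJiso : ∀ x y : V, ⟪J x, J y⟫ = ⟪x, y⟫)
    (hKiso : ∀ x y : V, ⟪K x, K y⟫ = ⟪x, y⟫)
    (γI γJ γK : V →ₗ[ℝ] V →ₗ[ℝ] ℝ)
    (hγI : ∀ x y : V, γI x y = -γI y x)
    (hγJ : ∀ x y : V, γJ x y = -γJ y x)
    (hγK : ∀ x y : V, γK x y = -γK y x)
    (h1 : wedge22 (fun x y => γI x y) (fun x y => ⟪x, J y⟫) =
          wedge22 (fun x y => γJ x y) (fun x y => ⟪x, I y⟫))
    (h2 : wedge22 (fun x y => γJ x y) (fun x y => ⟪x, K y⟫) =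
          wedge22 (fun x y => γK x y) (fun x y => ⟪x, J y⟫))
    (h3 : wedge22 (fun x y => γK x y) (fun x y => ⟪x, I y⟫) =
          wedge22 (fun x y => γI x y) (fun x y => ⟪x, K y⟫)) :
    ∃ c : ℝ,
      (∀ x y : V, γI x y = c * ⟪x, I y⟫) ∧
      (∀ x y : V, γJ x y = c * ⟪x, J y⟫) ∧
      (∀ x y : V, γK x y = c * ⟪x, K y⟫) ∧
      2 * (n : ℝ) * c = ip2 e (fun x y => γI x y) (fun x y => ⟪x, I y⟫) ∧
      ip2 e (fun x y => γI x y) (fun x y => ⟪x, I y⟫) =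
        ip2 e (fun x y => γJ x y) (fun x y => ⟪x, J y⟫) ∧
      ip2 e (fun x y => γJ x y) (fun x y => ⟪x, J y⟫) =
        ip2 e (fun x y => γK x y) (fun x y => ⟪x, K y⟫) :=
  stmt4_general n hn V hdim ι e I J K hI2 hJ2 hK hIJ hIiso hJiso γI γJ γK hγI hγJ hγK h1 h2 h3
end

section
/- Under the hypotheses of the previous setting (n > 1, γ_I ∧ ω_J = γ_J ∧ ω_I etc.), each γ_A is anti-Hermitian with respect to the other two complex structures: γ_I(Kx, Ky) = -γ_I(x, y) and γ_I(Jx, Jy) = -γ_I(x, y), and similarly for γ_J and γ_K. -/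
/-!
Fix `z` and pick `x ≠ 0` orthogonal to the quaternionic line `ℍ z`, which exists as
`dim V ≥ 8`. Evaluated at `(z, K z, x, J x)` and at `(z, K z, x, I x)`, each side of
`γ_I ∧ ω_J = γ_J ∧ ω_I` keeps a single term, which yields `γ_I(z, K z) ‖x‖² = 0` and
`γ_J(z, K z) ‖x‖² = 0`. Polarizing `γ(z, M z) = 0` and using `M² = -1` and the
antisymmetry of `γ` gives `γ(M x, M y) = -γ(x, y)`. The other cases follow by cycling
`(I, J, K)`.
-/

open scoped RealInnerProductSpace

theorem wedge22_apply_eq_mul {V : Type*} (a b : V → V → ℝ) {z w x y : V}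
    (hwy : b w y = 0) (hwx : b w x = 0) (hzy : b z y = 0) (hzx : b z x = 0) (hzw : b z w = 0) :
    wedge22 a b z w x y = a z w * b x y := by
  simp only [wedge22, hwy, hwx, hzy, hzx, hzw]
  ring

theorem LinearMap.apply_map_map_eq_neg {R M : Type*} [CommRing R] [AddCommGroup M] [Module R M]
    (γ : M →ₗ[R] M →ₗ[R] R) (A : M →ₗ[R] M) (hγ : ∀ x y, γ x y = -γ y x)
    (hA : ∀ x, A (A x) = -x) (h : ∀ x, γ x (A x) = 0) (x y : M) :
    γ (A x) (A y) = -γ x y := by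
  have polarized : γ (A x) (A y) = -γ y (A (A x)) := by
    have hsum := h (A x + y)
    simp only [map_add, LinearMap.add_apply, h] at hsum
    linear_combination hsum
  rw [polarized, hA, map_neg, neg_neg, hγ]

section InnerProductSpace

variable {V : Type*} [NormedAddCommGroup V] [InnerProductSpace ℝ V]

theorem inner_map_right_eq_neg {A : V → V} (hA : ∀ x, A (A x) = -x)
    (hA_inner : ∀ x y, ⟪A x, A y⟫ = ⟪x, y⟫) (x y : V) : ⟪x, A y⟫ = -⟪A x, y⟫ := by
  rw [← hA_inner x (A y), hA, inner_neg_right]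

theorem inner_self_map_eq_zero {A : V → V} (hA : ∀ x, A (A x) = -x)
    (hA_inner : ∀ x y, ⟪A x, A y⟫ = ⟪x, y⟫) (x : V) : ⟪x, A x⟫ = 0 := by
  have := inner_map_right_eq_neg hA hA_inner x x
  rw [real_inner_comm x (A x)] at this
  linarith

theorem Submodule.apply_mem_orthogonal {A : V → V} (hA : ∀ x y, ⟪x, A y⟫ = -⟪A x, y⟫)
    {S : Submodule ℝ V} (hS : ∀ u ∈ S, A u ∈ S) {v : V} (hv : v ∈ Sᗮ) : A v ∈ Sᗮ := by
  intro u hu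
  rw [hA, inner_right_of_mem_orthogonal (hS u hu) hv, neg_zero]

theorem wedge22_inner_map_apply (a : V → V → ℝ) {A : V → V} {S : Submodule ℝ V}
    (hA : ∀ v ∈ Sᗮ, A v ∈ Sᗮ) {z w x y : V} (hz : z ∈ S) (hw : w ∈ S) (hx : x ∈ Sᗮ)
    (hy : y ∈ Sᗮ) (hzw : ⟪z, A w⟫ = 0) :
    wedge22 a (fun u v => ⟪u, A v⟫) z w x y = a z w * ⟪x, A y⟫ := by
  have orth : ∀ {u v}, u ∈ S → v ∈ Sᗮ → ⟪u, A v⟫ = 0 := fun hu hv =>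
    Submodule.inner_right_of_mem_orthogonal hu (hA _ hv)
  exact wedge22_apply_eq_mul _ _ (orth hw hy) (orth hw hx) (orth hz hy) (orth hz hx) hzw

variable (V) in
structure QuaternionHermitianStructure where
  I : V →ₗ[ℝ] V
  J : V →ₗ[ℝ] V
  K : V →ₗ[ℝ] V
  I_I : ∀ x, I (I x) = -x
  J_J : ∀ x, J (J x) = -x
  I_J : ∀ x, I (J x) = K x
  J_I : ∀ x, J (I x) = -K x
  inner_I_I : ∀ x y, ⟪I x, I y⟫ = ⟪x, y⟫
  inner_J_J : ∀ x y, ⟪J x, J y⟫ = ⟪x, y⟫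

namespace QuaternionHermitianStructure

variable (Q : QuaternionHermitianStructure V)

theorem I_K (x : V) : Q.I (Q.K x) = -Q.J x := by
  rw [← Q.I_J, Q.I_I]

theorem J_K (x : V) : Q.J (Q.K x) = Q.I x := by
  rw [← Q.I_J x, Q.J_I, ← Q.I_J, Q.J_J, map_neg, neg_neg]

theorem K_I (x : V) : Q.K (Q.I x) = Q.J x := by
  rw [← Q.I_J, Q.J_I, map_neg, Q.I_K, neg_neg]

theorem K_J (x : V) : Q.K (Q.J x) = -Q.I x := by
  rw [← Q.I_J, Q.J_J, map_neg]

theorem K_K (x : V) : Q.K (Q.K x) = -x := by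
  rw [← Q.I_J x, Q.K_I, Q.J_J]

theorem inner_K_K (x y : V) : ⟪Q.K x, Q.K y⟫ = ⟪x, y⟫ := by
  rw [← Q.I_J, ← Q.I_J, Q.inner_I_I, Q.inner_J_J]

def rotate : QuaternionHermitianStructure V where
  I := Q.J
  J := Q.K
  K := Q.I
  I_I := Q.J_J
  J_J := Q.K_K
  I_J := Q.J_K
  J_I := Q.K_J
  inner_I_I := Q.inner_J_J
  inner_J_J := Q.inner_K_K

/-- The quaternionic line `ℍ z`. -/
def line (z : V) : Submodule ℝ V :=
  Submodule.span ℝ (Set.range ![z, Q.I z, Q.J z, Q.K z])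

theorem finrank_line_le (z : V) : Module.finrank ℝ (Q.line z) ≤ 4 :=
  finrank_range_le_card (R := ℝ) _

@[simp] theorem mem_line_self (z : V) : z ∈ Q.line z :=
  Submodule.subset_span ⟨0, rfl⟩

@[simp] theorem I_mem_line_self (z : V) : Q.I z ∈ Q.line z :=
  Submodule.subset_span ⟨1, rfl⟩

@[simp] theorem J_mem_line_self (z : V) : Q.J z ∈ Q.line z :=
  Submodule.subset_span ⟨2, rfl⟩

@[simp] theorem K_mem_line_self (z : V) : Q.K z ∈ Q.line z :=
  Submodule.subset_span ⟨3, rfl⟩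

theorem line_le_comap_I (z : V) : Q.line z ≤ (Q.line z).comap Q.I :=
  Submodule.span_le.2 <| Set.range_subset_iff.2 fun i => by
    fin_cases i <;> simp [Q.I_I, Q.I_J, Q.I_K]

theorem line_le_comap_J (z : V) : Q.line z ≤ (Q.line z).comap Q.J :=
  Submodule.span_le.2 <| Set.range_subset_iff.2 fun i => by
    fin_cases i <;> simp [Q.J_I, Q.J_J, Q.J_K]

theorem exists_mem_orthogonal_line_ne_zero [FiniteDimensional ℝ V]
    (hV : 4 < Module.finrank ℝ V) (z : V) : ∃ x ∈ (Q.line z)ᗮ, x ≠ 0 := by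
  refine Submodule.exists_mem_ne_zero_of_ne_bot fun h => ?_
  have hle := Q.finrank_line_le z
  rw [Submodule.orthogonal_eq_bot_iff.1 h, finrank_top] at hle
  omega

theorem apply_K_eq_zero_of_wedge22_eq [FiniteDimensional ℝ V] (hV : 4 < Module.finrank ℝ V)
    (γI γJ : V →ₗ[ℝ] V →ₗ[ℝ] ℝ)
    (h : wedge22 (fun x y => γI x y) (fun x y => ⟪x, Q.J y⟫) =
      wedge22 (fun x y => γJ x y) (fun x y => ⟪x, Q.I y⟫)) (z : V) :
    γI z (Q.K z) = 0 ∧ γJ z (Q.K z) = 0 := by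
  obtain ⟨x, hx, hx0⟩ := Q.exists_mem_orthogonal_line_ne_zero hV z
  have hI : ∀ v ∈ (Q.line z)ᗮ, Q.I v ∈ (Q.line z)ᗮ := fun _ =>
    Submodule.apply_mem_orthogonal (inner_map_right_eq_neg Q.I_I Q.inner_I_I)
      (Q.line_le_comap_I z)
  have hJ : ∀ v ∈ (Q.line z)ᗮ, Q.J v ∈ (Q.line z)ᗮ := fun _ =>
    Submodule.apply_mem_orthogonal (inner_map_right_eq_neg Q.J_J Q.inner_J_J)
      (Q.line_le_comap_J z)
  have inner_self_I : ∀ v, ⟪v, Q.I v⟫ = 0 := inner_self_map_eq_zero Q.I_I Q.inner_I_I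
  have inner_self_J : ∀ v, ⟪v, Q.J v⟫ = 0 := inner_self_map_eq_zero Q.J_J Q.inner_J_J
  have inner_self_K : ∀ v, ⟪v, Q.K v⟫ = 0 := inner_self_map_eq_zero Q.K_K Q.inner_K_K
  have eval : ∀ y ∈ (Q.line z)ᗮ,
      γI z (Q.K z) * ⟪x, Q.J y⟫ = γJ z (Q.K z) * ⟪x, Q.I y⟫ := by
    intro y hy
    have hzKz := congrFun (congrFun (congrFun (congrFun h z) (Q.K z)) x) y
    rwa [wedge22_inner_map_apply _ hJ (Q.mem_line_self z) (Q.K_mem_line_self z) hx hy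
        (by rw [Q.J_K, inner_self_I]),
      wedge22_inner_map_apply _ hI (Q.mem_line_self z) (Q.K_mem_line_self z) hx hy
        (by rw [Q.I_K, inner_neg_right, inner_self_J, neg_zero])] at hzKz
  have eval_J := eval (Q.J x) (hJ x hx)
  have eval_I := eval (Q.I x) (hI x hx)
  rw [Q.J_J, Q.I_J, inner_neg_right, inner_self_K] at eval_J
  rw [Q.J_I, Q.I_I, inner_neg_right, inner_neg_right, inner_self_K] at eval_I
  constructor
  · simpa [hx0] using eval_J
  · simpa [hx0] using eval_I.symm

end QuaternionHermitianStructure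

end InnerProductSpace

theorem stmt5_general (n : ℕ) (hn : 1 < n) (V : Type*) [NormedAddCommGroup V]
    [InnerProductSpace ℝ V] [FiniteDimensional ℝ V]
    (hdim : Module.finrank ℝ V = 4 * n)
    (I J K : V →ₗ[ℝ] V)
    (hI2 : ∀ x : V, I (I x) = -x) (hJ2 : ∀ x : V, J (J x) = -x)
    (hK : ∀ x : V, K x = I (J x)) (hIJ : ∀ x : V, I (J x) = -J (I x))
    (hIiso : ∀ x y : V, ⟪I x, I y⟫ = ⟪x, y⟫)
    (hJiso : ∀ x y : V, ⟪J x, J y⟫ = ⟪x, y⟫)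
    (γI γJ γK : V →ₗ[ℝ] V →ₗ[ℝ] ℝ)
    (hγI : ∀ x y : V, γI x y = -γI y x)
    (hγJ : ∀ x y : V, γJ x y = -γJ y x)
    (hγK : ∀ x y : V, γK x y = -γK y x)
    (h1 : wedge22 (fun x y => γI x y) (fun x y => ⟪x, J y⟫) =
          wedge22 (fun x y => γJ x y) (fun x y => ⟪x, I y⟫))
    (h2 : wedge22 (fun x y => γJ x y) (fun x y => ⟪x, K y⟫) =
          wedge22 (fun x y => γK x y) (fun x y => ⟪x, J y⟫))
    (h3 : wedge22 (fun x y => γK x y) (fun x y => ⟪x, I y⟫) =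
          wedge22 (fun x y => γI x y) (fun x y => ⟪x, K y⟫)) :
    (∀ x y : V, γI (J x) (J y) = -γI x y) ∧ (∀ x y : V, γI (K x) (K y) = -γI x y) ∧
    (∀ x y : V, γJ (I x) (I y) = -γJ x y) ∧ (∀ x y : V, γJ (K x) (K y) = -γJ x y) ∧
    (∀ x y : V, γK (I x) (I y) = -γK x y) ∧ (∀ x y : V, γK (J x) (J y) = -γK x y) := by
  let Q : QuaternionHermitianStructure V :=
    { I, J, K, I_I := hI2, J_J := hJ2, I_J := fun x => (hK x).symm,
      J_I := fun x => by rw [hK, hIJ, neg_neg], inner_I_I := hIiso, inner_J_J := hJiso }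
  have hV : 4 < Module.finrank ℝ V := by omega
  have hIJK := Q.apply_K_eq_zero_of_wedge22_eq hV γI γJ h1
  have hJKI := Q.rotate.apply_K_eq_zero_of_wedge22_eq hV γJ γK h2
  have hKIJ := Q.rotate.rotate.apply_K_eq_zero_of_wedge22_eq hV γK γI h3
  exact ⟨γI.apply_map_map_eq_neg J hγI hJ2 fun z => (hKIJ z).2,
    γI.apply_map_map_eq_neg K hγI Q.K_K fun z => (hIJK z).1,
    γJ.apply_map_map_eq_neg I hγJ hI2 fun z => (hJKI z).1,
    γJ.apply_map_map_eq_neg K hγJ Q.K_K fun z => (hIJK z).2,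
    γK.apply_map_map_eq_neg I hγK hI2 fun z => (hJKI z).2,
    γK.apply_map_map_eq_neg J hγK hJ2 fun z => (hKIJ z).1⟩

/-- under the wedge relations `γ_I ∧ ω_J = γ_J ∧ ω_I` etc., each `γ_A`
is anti-Hermitian with respect to the other two complex structures. -/
theorem stmt5 (n : ℕ) (hn : 1 < n) (V : Type*) [NormedAddCommGroup V]
    [InnerProductSpace ℝ V] [FiniteDimensional ℝ V]
    (hdim : Module.finrank ℝ V = 4 * n)
    (I J K : V →ₗ[ℝ] V)
    (hI2 : ∀ x : V, I (I x) = -x) (hJ2 : ∀ x : V, J (J x) = -x)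
    (hK : ∀ x : V, K x = I (J x)) (hIJ : ∀ x : V, I (J x) = -J (I x))
    (hIiso : ∀ x y : V, ⟪I x, I y⟫ = ⟪x, y⟫)
    (hJiso : ∀ x y : V, ⟪J x, J y⟫ = ⟪x, y⟫)
    (hKiso : ∀ x y : V, ⟪K x, K y⟫ = ⟪x, y⟫)
    (γI γJ γK : V →ₗ[ℝ] V →ₗ[ℝ] ℝ)
    (hγI : ∀ x y : V, γI x y = -γI y x)
    (hγJ : ∀ x y : V, γJ x y = -γJ y x)
    (hγK : ∀ x y : V, γK x y = -γK y x)
    (h1 : wedge22 (fun x y => γI x y) (fun x y => ⟪x, J y⟫) =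
          wedge22 (fun x y => γJ x y) (fun x y => ⟪x, I y⟫))
    (h2 : wedge22 (fun x y => γJ x y) (fun x y => ⟪x, K y⟫) =
          wedge22 (fun x y => γK x y) (fun x y => ⟪x, J y⟫))
    (h3 : wedge22 (fun x y => γK x y) (fun x y => ⟪x, I y⟫) =
          wedge22 (fun x y => γI x y) (fun x y => ⟪x, K y⟫)) :
    (∀ x y : V, γI (J x) (J y) = -γI x y) ∧ (∀ x y : V, γI (K x) (K y) = -γI x y) ∧
    (∀ x y : V, γJ (I x) (I y) = -γJ x y) ∧ (∀ x y : V, γJ (K x) (K y) = -γJ x y) ∧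
    (∀ x y : V, γK (I x) (I y) = -γK x y) ∧ (∀ x y : V, γK (J x) (J y) = -γK x y) :=
  stmt5_general n hn V hdim I J K hI2 hJ2 hK hIJ hIiso hJiso γI γJ γK hγI hγJ hγK h1 h2 h3
end

section
/- Let V be a 4n-dimensional quaternion-Hermitian vector space, and let R be an algebraic curvature tensor on V. Define the q-Ricci tensor Ric^q(R)(x,y) = Σ_{A=I,J,K} Σᵢ R(x, eᵢ, Ay, Aeᵢ). Then the skew-symmetric part of Ric^q(R) is orthogonal to each Kähler form: ⟨(Ric^q)_a, ω_A⟩ = 0 for A = I, J, K. -/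
/-!
Each of `I, J, K` is skew-adjoint, so its contraction with a bilinear form only sees the skew
part of the form, and contracting `Ric^q(eᵢ, eⱼ)` against `⟪eᵢ, A eⱼ⟫` turns its second slot
into `-A eᵢ`. With `τ(S, T) = ∑ᵢₖ R(eᵢ, eₖ, S eᵢ, T eₖ)` (`curvatureTrace`), the contraction
for `A = I` becomes `-(τ(I², I) + τ(JI, J) + τ(KI, K)) = τ(id, I) + τ(K, J) - τ(J, K)`.
Here `τ(id, I) = 0` since the Ricci contraction of `R` is symmetric and `I` is skew, and `τ` is
symmetric by the two skew-symmetries of `R`. The cases `J` and `K` are the cyclic permutations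
of this one.
-/

open scoped RealInnerProductSpace

section InnerProduct

variable {V : Type*} [NormedAddCommGroup V] [InnerProductSpace ℝ V]
  {ι : Type*} [Fintype ι]

lemma inner_map_left_eq_neg_of_sq_eq_neg (A : V →ₗ[ℝ] V) (hA2 : ∀ x, A (A x) = -x)
    (hAiso : ∀ x y, ⟪A x, A y⟫ = ⟪x, y⟫) (x y : V) : ⟪A x, y⟫ = -⟪x, A y⟫ := by
  have h := hAiso x (A y)
  rw [hA2, inner_neg_right] at h
  linarith

lemma Finset.sum_sum_mul_eq_zero_of_symm_of_antisymm (ρ a : ι → ι → ℝ)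
    (hρ : ∀ k m, ρ k m = ρ m k) (ha : ∀ k m, a k m = -a m k) :
    ∑ k, ∑ m, ρ k m * a k m = 0 := by
  have h : ∑ k, ∑ m, ρ k m * a k m = -∑ k, ∑ m, ρ k m * a k m := by
    conv_lhs => rw [Finset.sum_comm]
    simp only [← Finset.sum_neg_distrib]
    refine Finset.sum_congr rfl fun k _ => Finset.sum_congr rfl fun m _ => ?_
    rw [hρ m k, ha m k]
    ring
  linarith

variable (e : OrthonormalBasis ι ℝ V)

lemma OrthonormalBasis.map_eq_sum_map_mul_inner (f : V →ₗ[ℝ] ℝ) (v : V) :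
    f v = ∑ m, f (e m) * ⟪e m, v⟫ := by
  conv_lhs => rw [← e.sum_repr' v]
  simp only [map_sum, map_smul, smul_eq_mul, mul_comm]

variable {C : V →ₗ[ℝ] V} (hC : ∀ x y, ⟪C x, y⟫ = -⟪x, C y⟫)
include hC

lemma OrthonormalBasis.sum_map_mul_inner_skew (f : V →ₗ[ℝ] ℝ) (v : V) :
    ∑ j, f (e j) * ⟪v, C (e j)⟫ = -f (C v) := by
  rw [e.map_eq_sum_map_mul_inner f, ← Finset.sum_neg_distrib]
  refine Finset.sum_congr rfl fun j _ => ?_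
  rw [real_inner_comm, hC, real_inner_comm]
  ring

lemma OrthonormalBasis.sum_sum_swap_mul_inner_skew (b : V → V → ℝ) :
    ∑ i, ∑ j, b (e j) (e i) * ⟪e i, C (e j)⟫ = -∑ i, ∑ j, b (e i) (e j) * ⟪e i, C (e j)⟫ := by
  rw [Finset.sum_comm]
  simp only [← Finset.sum_neg_distrib]
  refine Finset.sum_congr rfl fun i _ => Finset.sum_congr rfl fun j _ => ?_
  rw [real_inner_comm, hC]
  ring

lemma OrthonormalBasis.sum_sum_skewPart_mul_inner_skew (b b' : V → V → ℝ)
    (hb' : ∀ x y, b' x y = (1 / 2 : ℝ) * (b x y - b y x)) :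
    ∑ i, ∑ j, b' (e i) (e j) * ⟪e i, C (e j)⟫ = ∑ i, ∑ j, b (e i) (e j) * ⟪e i, C (e j)⟫ := by
  have hswap := e.sum_sum_swap_mul_inner_skew hC b
  simp only [hb', mul_assoc, sub_mul, ← Finset.mul_sum, Finset.sum_sub_distrib] at hswap ⊢
  rw [hswap]
  ring

end InnerProduct

section CurvatureTrace

variable {V : Type*} [NormedAddCommGroup V] [InnerProductSpace ℝ V]
  {ι : Type*} [Fintype ι]
  (R : V →ₗ[ℝ] V →ₗ[ℝ] V →ₗ[ℝ] V →ₗ[ℝ] ℝ) (e : OrthonormalBasis ι ℝ V)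

noncomputable def curvatureTrace (S T : V →ₗ[ℝ] V) : ℝ :=
  ∑ i, ∑ k, R (e i) (e k) (S (e i)) (T (e k))

lemma curvatureTrace_neg_left (S T : V →ₗ[ℝ] V) :
    curvatureTrace R e (-S) T = -curvatureTrace R e S T := by
  simp only [curvatureTrace, LinearMap.neg_apply, map_neg, Finset.sum_neg_distrib]

lemma curvatureTrace_comm (hskew1 : ∀ x y z u, R x y z u = -R y x z u)
    (hskew2 : ∀ x y z u, R x y z u = -R x y u z) (S T : V →ₗ[ℝ] V) :
    curvatureTrace R e S T = curvatureTrace R e T S := by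
  rw [curvatureTrace, curvatureTrace, Finset.sum_comm]
  refine Finset.sum_congr rfl fun i _ => Finset.sum_congr rfl fun k _ => ?_
  rw [hskew1, hskew2, neg_neg]

lemma curvatureTrace_id_left (hpair : ∀ x y z u, R x y z u = R z u x y)
    {C : V →ₗ[ℝ] V} (hC : ∀ x y, ⟪C x, y⟫ = -⟪x, C y⟫) :
    curvatureTrace R e LinearMap.id C = 0 := by
  refine Finset.sum_eq_zero fun i _ => ?_
  simp only [LinearMap.id_apply, e.map_eq_sum_map_mul_inner (R (e i) (e _) (e i)) (C _)]
  refine Finset.sum_sum_mul_eq_zero_of_symm_of_antisymm _ _ (fun _ _ => hpair _ _ _ _) ?_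
  intro k m
  rw [real_inner_comm, hC, real_inner_comm]

lemma sum_sum_curvature_mul_inner_skew (B : V →ₗ[ℝ] V) {C : V →ₗ[ℝ] V}
    (hC : ∀ x y, ⟪C x, y⟫ = -⟪x, C y⟫) :
    ∑ i, ∑ j, (∑ k, R (e i) (e k) (B (e j)) (B (e k))) * ⟪e i, C (e j)⟫
      = -curvatureTrace R e (B ∘ₗ C) B := by
  rw [curvatureTrace, ← Finset.sum_neg_distrib]
  refine Finset.sum_congr rfl fun i _ => ?_
  simp only [Finset.sum_mul]
  rw [Finset.sum_comm, ← Finset.sum_neg_distrib]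
  exact Finset.sum_congr rfl fun k _ =>
    e.sum_map_mul_inner_skew hC (((R (e i) (e k)).flip (B (e k))) ∘ₗ B) (e i)

lemma curvatureTrace_quaternion_eq_zero (hskew1 : ∀ x y z u, R x y z u = -R y x z u)
    (hskew2 : ∀ x y z u, R x y z u = -R x y u z) (hpair : ∀ x y z u, R x y z u = R z u x y)
    (A P Q : V →ₗ[ℝ] V) (hA : ∀ x y, ⟪A x, y⟫ = -⟪x, A y⟫)
    (hAA : A ∘ₗ A = -LinearMap.id) (hPA : P ∘ₗ A = -Q) (hQA : Q ∘ₗ A = P) :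
    curvatureTrace R e (A ∘ₗ A) A + curvatureTrace R e (P ∘ₗ A) P +
      curvatureTrace R e (Q ∘ₗ A) Q = 0 := by
  rw [hAA, hPA, hQA, curvatureTrace_neg_left, curvatureTrace_neg_left,
    curvatureTrace_id_left R e hpair hA, curvatureTrace_comm R e hskew1 hskew2 Q P]
  ring

end CurvatureTrace

section Quaternion

variable {V : Type*} [AddCommGroup V] [Module ℝ V] {I J K : V →ₗ[ℝ] V}

lemma quaternion_comp_table (hI2 : ∀ x, I (I x) = -x) (hJ2 : ∀ x, J (J x) = -x)
    (hK : ∀ x, K x = I (J x)) (hIJ : ∀ x, I (J x) = -J (I x)) :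
    J ∘ₗ I = -K ∧ K ∘ₗ I = J ∧ K ∘ₗ J = -I ∧ I ∘ₗ K = -J ∧ J ∘ₗ K = I ∧
      K ∘ₗ K = -LinearMap.id := by
  have hJI : ∀ x, J (I x) = -K x := fun x => by rw [hK, hIJ, neg_neg]
  have hKI : ∀ x, K (I x) = J x := fun x => by rw [hK, hJI, map_neg, hK, hI2, neg_neg]
  have hKJ : ∀ x, K (J x) = -I x := fun x => by rw [hK, hJ2, map_neg]
  have hIK : ∀ x, I (K x) = -J x := fun x => by rw [hK, hI2]
  have hJK : ∀ x, J (K x) = I x := fun x => by rw [hK, hJI, hKJ, neg_neg]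
  have hKK : ∀ x, K (K x) = -x := fun x => by rw [hK (K x), hJK, hI2]
  exact ⟨LinearMap.ext hJI, LinearMap.ext hKI, LinearMap.ext hKJ, LinearMap.ext hIK,
    LinearMap.ext hJK, LinearMap.ext hKK⟩

end Quaternion

theorem stmt9_general (V : Type*) [NormedAddCommGroup V] [InnerProductSpace ℝ V]
    (ι : Type*) [Fintype ι] (e : OrthonormalBasis ι ℝ V)
    (I J K : V →ₗ[ℝ] V)
    (hI2 : ∀ x : V, I (I x) = -x) (hJ2 : ∀ x : V, J (J x) = -x)
    (hK : ∀ x : V, K x = I (J x)) (hIJ : ∀ x : V, I (J x) = -J (I x))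
    (hIiso : ∀ x y : V, ⟪I x, I y⟫ = ⟪x, y⟫)
    (hJiso : ∀ x y : V, ⟪J x, J y⟫ = ⟪x, y⟫)
    (hKiso : ∀ x y : V, ⟪K x, K y⟫ = ⟪x, y⟫)
    (R : V →ₗ[ℝ] V →ₗ[ℝ] V →ₗ[ℝ] V →ₗ[ℝ] ℝ)
    (hskew1 : ∀ x y z u : V, R x y z u = -R y x z u)
    (hskew2 : ∀ x y z u : V, R x y z u = -R x y u z)
    (hpair : ∀ x y z u : V, R x y z u = R z u x y)
    (Ricq : V → V → ℝ)
    (hRicq : ∀ x y : V, Ricq x y =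
      ∑ i, (R x (e i) (I y) (I (e i)) + R x (e i) (J y) (J (e i)) +
            R x (e i) (K y) (K (e i))))
    (Ricqa : V → V → ℝ)
    (hRicqa : ∀ x y : V, Ricqa x y = (1 / 2 : ℝ) * (Ricq x y - Ricq y x)) :
    ((1 / 2 : ℝ) * ∑ i, ∑ j, Ricqa (e i) (e j) * ⟪e i, I (e j)⟫ = 0) ∧
    ((1 / 2 : ℝ) * ∑ i, ∑ j, Ricqa (e i) (e j) * ⟪e i, J (e j)⟫ = 0) ∧
    ((1 / 2 : ℝ) * ∑ i, ∑ j, Ricqa (e i) (e j) * ⟪e i, K (e j)⟫ = 0) := by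
  obtain ⟨hJI, hKI, hKJ, hIK, hJK, hKK⟩ := quaternion_comp_table hI2 hJ2 hK hIJ
  have hII : I ∘ₗ I = -LinearMap.id := LinearMap.ext hI2
  have hJJ : J ∘ₗ J = -LinearMap.id := LinearMap.ext hJ2
  have hIJ' : I ∘ₗ J = K := LinearMap.ext fun x => (hK x).symm
  have hIskew := inner_map_left_eq_neg_of_sq_eq_neg I hI2 hIiso
  have hJskew := inner_map_left_eq_neg_of_sq_eq_neg J hJ2 hJiso
  have hKskew := inner_map_left_eq_neg_of_sq_eq_neg K (LinearMap.congr_fun hKK) hKiso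
  have hcontract : ∀ C : V →ₗ[ℝ] V, (∀ x y, ⟪C x, y⟫ = -⟪x, C y⟫) →
      ∑ i, ∑ j, Ricqa (e i) (e j) * ⟪e i, C (e j)⟫ =
        -(curvatureTrace R e (I ∘ₗ C) I + curvatureTrace R e (J ∘ₗ C) J +
          curvatureTrace R e (K ∘ₗ C) K) := by
    intro C hC
    rw [e.sum_sum_skewPart_mul_inner_skew hC Ricq Ricqa hRicqa]
    simp only [hRicq, Finset.sum_add_distrib, add_mul, sum_sum_curvature_mul_inner_skew R e _ hC]
    ring
  have hvanish := curvatureTrace_quaternion_eq_zero R e hskew1 hskew2 hpair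
  refine ⟨?_, ?_, ?_⟩
  · linarith [hcontract I hIskew, hvanish I J K hIskew hII hJI hKI]
  · linarith [hcontract J hJskew, hvanish J K I hJskew hJJ hKJ hIJ']
  · linarith [hcontract K hKskew, hvanish K I J hKskew hKK hIK hJK]

/-- the skew-symmetric part of the q-Ricci tensor of an algebraic
curvature tensor is orthogonal to each of the Kähler forms `ω_I, ω_J, ω_K`. -/
theorem stmt9 (n : ℕ) (V : Type*) [NormedAddCommGroup V] [InnerProductSpace ℝ V]
    [FiniteDimensional ℝ V] (hdim : Module.finrank ℝ V = 4 * n)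
    (ι : Type*) [Fintype ι] (e : OrthonormalBasis ι ℝ V)
    (I J K : V →ₗ[ℝ] V)
    (hI2 : ∀ x : V, I (I x) = -x) (hJ2 : ∀ x : V, J (J x) = -x)
    (hK : ∀ x : V, K x = I (J x)) (hIJ : ∀ x : V, I (J x) = -J (I x))
    (hIiso : ∀ x y : V, ⟪I x, I y⟫ = ⟪x, y⟫)
    (hJiso : ∀ x y : V, ⟪J x, J y⟫ = ⟪x, y⟫)
    (hKiso : ∀ x y : V, ⟪K x, K y⟫ = ⟪x, y⟫)
    (R : V →ₗ[ℝ] V →ₗ[ℝ] V →ₗ[ℝ] V →ₗ[ℝ] ℝ)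
    (hskew1 : ∀ x y z u : V, R x y z u = -R y x z u)
    (hskew2 : ∀ x y z u : V, R x y z u = -R x y u z)
    (hpair : ∀ x y z u : V, R x y z u = R z u x y)
    (hbianchi : ∀ x y z u : V, R x y z u + R y z x u + R z x y u = 0)
    (Ricq : V → V → ℝ)
    (hRicq : ∀ x y : V, Ricq x y =
      ∑ i, (R x (e i) (I y) (I (e i)) + R x (e i) (J y) (J (e i)) +
            R x (e i) (K y) (K (e i))))
    (Ricqa : V → V → ℝ)
    (hRicqa : ∀ x y : V, Ricqa x y = (1 / 2 : ℝ) * (Ricq x y - Ricq y x)) :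
    ((1 / 2 : ℝ) * ∑ i, ∑ j, Ricqa (e i) (e j) * ⟪e i, I (e j)⟫ = 0) ∧
    ((1 / 2 : ℝ) * ∑ i, ∑ j, Ricqa (e i) (e j) * ⟪e i, J (e j)⟫ = 0) ∧
    ((1 / 2 : ℝ) * ∑ i, ∑ j, Ricqa (e i) (e j) * ⟪e i, K (e j)⟫ = 0) :=
  stmt9_general V ι e I J K hI2 hJ2 hK hIJ hIiso hJiso hKiso R hskew1 hskew2 hpair Ricq hRicq Ricqa
    hRicqa
end
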